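/- Let G be a graph, let (A,X,B) be a tri-separation of G, and let u, v ∈ B with uv ∈ E(G). Then G is chordal if and only if all three of the following graphs are chordal: G[A ∪ X], G[B ∪ X], and the graph G/uv obtained from G by contracting the edge uv. -/

import Mathlib

/-- The graph `G / uv` obtained by contracting the edge `uv`: the vertex `v` is removed
and `u` becomes the merged vertex, adjacent to every former neighbor of `u` or of `v`. -/
def contractEdge {α : Type} (G : SimpleGraph α) (u v : α) :
    SimpleGraph {x : α // x ≠ v} where
  Adj x y := x ≠ y ∧ (G.Adj x.1 y.1 ∨ (x.1 = u ∧ G.Adj v y.1) ∨ (y.1 = u ∧ G.Adj x.1 v))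
  symm := by
    constructor
    rintro x y ⟨hxy, h⟩
    refine ⟨hxy.symm, ?_⟩
    rcases h with h | ⟨h1, h2⟩ | ⟨h1, h2⟩
    · exact Or.inl h.symm
    · exact Or.inr (Or.inr ⟨h1, h2.symm⟩)
    · exact Or.inr (Or.inl ⟨h1, h2.symm⟩)
  loopless := by
    constructor
    rintro x ⟨hxx, -⟩
    exact hxx rfl

/-- A graph is chordal if it contains no hole, i.e. no induced cycle of length at least
four: there is no graph embedding of the `n`-cycle for any `n ≥ 4`. -/
def IsChordal {α : Type} (G : SimpleGraph α) : Prop :=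
  ∀ n : ℕ, 4 ≤ n → IsEmpty (SimpleGraph.cycleGraph n ↪g G)

/-!
Chordality passes to induced subgraphs, and to `G / uv`: a hole through the merged vertex lifts to
a hole of `G` through `u`, through `v`, or through both. Conversely, let `G / uv` be chordal and
let `C` be a hole of `G`. If `C` avoids `u` and `v`, it is still a hole of `G / uv`. Otherwise the
vertices of `C` other than `u, v` form an induced path of `G / uv` whose ends are adjacent to the
merged vertex, and in a chordal graph a vertex adjacent to both ends of an induced path is adjacent
to all of it. So every vertex of `C` is `u` or a neighbour of `u` or `v`; by the separation none
lies in `A`, and `C` is a hole of `G[B ∪ X]`.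
-/

open SimpleGraph

theorem cycleGraph_adj_iff_val {L : ℕ} {i j : Fin (L + 2)} :
    (cycleGraph (L + 2)).Adj i j ↔ (j : ℕ) = i + 1 ∨ (i : ℕ) = j + 1 ∨
      ((i : ℕ) = 0 ∧ (j : ℕ) = L + 1) ∨ ((j : ℕ) = 0 ∧ (i : ℕ) = L + 1) := by
  rw [cycleGraph_adj, sub_eq_iff_eq_add', sub_eq_iff_eq_add', Fin.ext_iff, Fin.ext_iff,
    Fin.val_add_one, Fin.val_add_one]
  split_ifs with hi hj hj <;> simp only [Fin.ext_iff, Fin.val_last] at * <;> omega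

theorem cycleGraph_adj_add_left {L : ℕ} (s : Fin (L + 2)) {i j : Fin (L + 2)} :
    (cycleGraph (L + 2)).Adj (s + i) (s + j) ↔ (cycleGraph (L + 2)).Adj i j := by
  simp only [cycleGraph_adj, add_sub_add_left_eq_sub]

theorem Fin.eq_or_eq_add_ofNat_succ {L : ℕ} (s i : Fin (L + 2)) :
    i = s ∨ ∃ k ≤ L, i = s + Fin.ofNat (L + 2) (k + 1) := by
  rcases Nat.eq_zero_or_pos (i - s : Fin (L + 2)) with h | h
  · left
    simpa [sub_eq_zero, Fin.ext_iff] using h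
  · refine Or.inr ⟨((i - s : Fin (L + 2)) : ℕ) - 1, by omega, ?_⟩
    rw [Nat.sub_add_cancel h, Fin.ofNat_val_eq_self, add_sub_cancel]

section

variable {α β : Type} {G : SimpleGraph α} {H : SimpleGraph β} {u v c : α} {L M : ℕ} {P : ℕ → α}

structure IsInducedPath (G : SimpleGraph α) (L : ℕ) (P : ℕ → α) : Prop where
  injOn : ∀ i ≤ L, ∀ j ≤ L, P i = P j → i = j
  adj_iff : ∀ i ≤ L, ∀ j ≤ L, G.Adj (P i) (P j) ↔ j = i + 1 ∨ i = j + 1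

/-- `c, P 0, …, P L` is a hole of `G`, an induced cycle of length `L + 2 ≥ 4`, rooted at `c`. -/
structure IsHoleAt (G : SimpleGraph α) (c : α) (L : ℕ) (P : ℕ → α) : Prop
    extends IsInducedPath G L P where
  two_le : 2 ≤ L
  ne_root : ∀ i ≤ L, P i ≠ c
  root_adj_iff : ∀ i ≤ L, G.Adj c (P i) ↔ i = 0 ∨ i = L

namespace IsInducedPath

theorem mono (hP : IsInducedPath G L P) (hM : M ≤ L) : IsInducedPath G M P :=
  ⟨fun i hi j hj => hP.injOn i (by omega) j (by omega),
    fun i hi j hj => hP.adj_iff i (by omega) j (by omega)⟩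

theorem shift (hP : IsInducedPath G L P) {a : ℕ} (h : a + M ≤ L) :
    IsInducedPath G M (fun k => P (a + k)) where
  injOn i hi j hj hij := by have := hP.injOn _ (by omega) _ (by omega) hij; omega
  adj_iff i hi j hj := (hP.adj_iff _ (by omega) _ (by omega)).trans (by omega)

theorem cons (hP : IsInducedPath G L P) {b : α} (hb : ∀ i ≤ L, P i ≠ b)
    (hbP : ∀ i ≤ L, G.Adj b (P i) ↔ i = 0) :
    IsInducedPath G (L + 1) (fun k => if k = 0 then b else P (k - 1)) where
  injOn i hi j hj hij := by
    split_ifs at hij with h₁ h₂ h₂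
    · omega
    · exact absurd hij.symm (hb _ (by omega))
    · exact absurd hij (hb _ (by omega))
    · have := hP.injOn _ (by omega) _ (by omega) hij; omega
  adj_iff i hi j hj := by
    split_ifs with h₁ h₂ h₂
    · simp only [G.irrefl, false_iff]; omega
    · rw [hbP _ (by omega)]; omega
    · rw [G.adj_comm, hbP _ (by omega)]; omega
    · rw [hP.adj_iff _ (by omega) _ (by omega)]; omega

theorem map (hP : IsInducedPath G L P) {f : α → β} {S : Set α} (hS : ∀ i ≤ L, P i ∈ S)
    (hf : S.InjOn f) (hadj : ∀ x ∈ S, ∀ y ∈ S, H.Adj (f x) (f y) ↔ G.Adj x y) :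
    IsInducedPath H L (f ∘ P) where
  injOn i hi j hj hij := hP.injOn i hi j hj (hf (hS i hi) (hS j hj) hij)
  adj_iff i hi j hj := (hadj _ (hS i hi) _ (hS j hj)).trans (hP.adj_iff i hi j hj)

end IsInducedPath

theorem IsInducedPath.isHoleAt_cons (hP : IsInducedPath G L P) (hL : 1 ≤ L) {a b : α}
    (hab : G.Adj a b) (ha : ∀ i ≤ L, P i ≠ a) (hb : ∀ i ≤ L, P i ≠ b)
    (hbP : ∀ i ≤ L, G.Adj b (P i) ↔ i = 0) (haP : ∀ i ≤ L, G.Adj a (P i) ↔ i = L) :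
    IsHoleAt G a (L + 1) (fun k => if k = 0 then b else P (k - 1)) := by
  refine ⟨hP.cons hb hbP, by omega, fun i hi => ?_, fun i hi => ?_⟩
  · split_ifs
    exacts [hab.ne.symm, ha _ (by omega)]
  · split_ifs with h
    · simp only [hab, true_iff]; omega
    · rw [haP _ (by omega)]; omega

theorem isHoleAt_of_embedding (e : cycleGraph (L + 2) ↪g G) (hL : 2 ≤ L) (s : Fin (L + 2)) :
    IsHoleAt G (e s) L (fun k => e (s + Fin.ofNat (L + 2) (k + 1))) := by
  have hval : ∀ a < L + 2, (Fin.ofNat (L + 2) a : ℕ) = a := fun a ha => by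
    rw [Fin.val_ofNat, Nat.mod_eq_of_lt ha]
  have heq : ∀ a < L + 2, ∀ b < L + 2,
      e (s + Fin.ofNat (L + 2) a) = e (s + Fin.ofNat (L + 2) b) → a = b := by
    intro a ha b hb h
    rw [← hval a ha, ← hval b hb, add_left_cancel (e.injective h)]
  have hadj : ∀ a < L + 2, ∀ b < L + 2,
      (G.Adj (e (s + Fin.ofNat (L + 2) a)) (e (s + Fin.ofNat (L + 2) b)) ↔
        b = a + 1 ∨ a = b + 1 ∨ (a = 0 ∧ b = L + 1) ∨ (b = 0 ∧ a = L + 1)) := by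
    intro a ha b hb
    rw [e.map_rel_iff, cycleGraph_adj_add_left, cycleGraph_adj_iff_val, hval a ha, hval b hb]
  have hs : e s = e (s + Fin.ofNat (L + 2) 0) := by simp
  refine ⟨⟨fun i hi j hj h => ?_, fun i hi j hj => ?_⟩, hL, fun i hi h => ?_, fun i hi => ?_⟩
  · have := heq _ (by omega) _ (by omega) h; omega
  · rw [hadj _ (by omega) _ (by omega)]; omega
  · rw [hs] at h
    have := heq _ (by omega) _ (by omega) h; omega
  · rw [hs, hadj _ (by omega) _ (by omega)]; omega

namespace IsChordal

theorem of_embedding (hG : IsChordal G) (f : H ↪g G) : IsChordal H :=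
  fun n hn => ⟨fun e => (hG n hn).false (f.comp e)⟩

theorem not_isHoleAt (hG : IsChordal G) (h : IsHoleAt G c L P) : False := by
  let f : Fin (L + 2) → α := fun i => if (i : ℕ) = 0 then c else P (i - 1)
  have hinj : Function.Injective f := by
    intro i j hij
    simp only [f] at hij
    split_ifs at hij with hi hj hj
    · omega
    · exact absurd hij.symm (h.ne_root _ (by omega))
    · exact absurd hij (h.ne_root _ (by omega))
    · have := h.injOn _ (by omega) _ (by omega) hij; omega
  have hadj : ∀ i j, G.Adj (f i) (f j) ↔ (cycleGraph (L + 2)).Adj i j := by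
    intro i j
    simp only [f, cycleGraph_adj_iff_val]
    split_ifs with hi hj hj
    · simp only [G.irrefl, false_iff]; omega
    · rw [h.root_adj_iff _ (by omega)]; omega
    · rw [G.adj_comm, h.root_adj_iff _ (by omega)]; omega
    · rw [h.adj_iff _ (by omega) _ (by omega)]; omega
  exact (hG (L + 2) (by have := h.two_le; omega)).false ⟨⟨f, hinj⟩, hadj _ _⟩

theorem exists_notMem_of_induce {s : Set α} (hs : IsChordal (G.induce s)) {n : ℕ}
    (hn : 4 ≤ n) (e : cycleGraph n ↪g G) : ∃ i, e i ∉ s := by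
  by_contra! h
  exact (hs n hn).false
    ⟨⟨fun i => ⟨e i, h i⟩, fun i j hij => e.injective (congrArg Subtype.val hij)⟩, e.map_rel_iff⟩

theorem adj_of_isInducedPath (hG : IsChordal G) (hP : IsInducedPath G L P)
    (hc : ∀ i ≤ L, P i ≠ c) (h₀ : G.Adj c (P 0)) (hL : G.Adj c (P L)) :
    ∀ i ≤ L, G.Adj c (P i) := by
  induction L using Nat.strong_induction_on generalizing P with
  | _ L ih =>
  -- a neighbour of `c` inside the path splits it in two; without one, `c` closes it into a hole
  by_cases hchord : ∃ j, 0 < j ∧ j < L ∧ G.Adj c (P j)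
  · obtain ⟨j, hj₀, hjL, hj⟩ := hchord
    intro i hi
    rcases le_total i j with hij | hji
    · exact ih j hjL (hP.mono hjL.le) (fun i hi => hc i (by omega)) h₀ hj i hij
    · have := ih (L - j) (by omega) (hP.shift (a := j) (by omega)) (fun i hi => hc _ (by omega))
        (by simpa using hj) (by rwa [Nat.add_sub_cancel' hjL.le]) (i - j) (by omega)
      rwa [Nat.add_sub_cancel' hji] at this
  · by_cases hL2 : 2 ≤ L
    · refine (hG.not_isHoleAt ⟨hP, hL2, hc, fun i hi => ⟨fun h => ?_, ?_⟩⟩).elim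
      · by_contra h'
        exact hchord ⟨i, by omega, by omega, h⟩
      · rintro (rfl | rfl) <;> assumption
    · intro i hi
      obtain rfl | rfl : i = 0 ∨ i = L := by omega
      all_goals assumption

end IsChordal

theorem contractEdge_adj_of_ne {x y : {x : α // x ≠ v}} (hx : x.1 ≠ u) (hy : y.1 ≠ u) :
    (contractEdge G u v).Adj x y ↔ G.Adj x.1 y.1 := by
  simp only [contractEdge, hx, hy, false_and, or_false, and_iff_right_iff_imp]
  exact fun h hxy => G.ne_of_adj h (congrArg Subtype.val hxy)

theorem contractEdge_adj_of_eq {x y : {x : α // x ≠ v}} (hx : x.1 = u) (hy : y.1 ≠ u) :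
    (contractEdge G u v).Adj x y ↔ G.Adj u y.1 ∨ G.Adj v y.1 := by
  have hxy : x ≠ y := fun h => hy (h ▸ hx)
  simp only [contractEdge, hx, hy, hxy, true_and, false_and, or_false, ne_eq, not_false_eq_true]

theorem IsChordal.induce_of_contractEdge (hC : IsChordal (contractEdge G u v)) :
    IsChordal (G.induce {x | x ≠ u ∧ x ≠ v}) :=
  hC.of_embedding
    ⟨⟨fun x => ⟨x.1, x.2.2⟩, fun _ _ h => Subtype.ext (by simpa using congrArg Subtype.val h)⟩,
      fun {x y} => contractEdge_adj_of_ne x.2.1 y.2.1⟩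

theorem IsChordal.contractEdge_induce (hG : IsChordal G) :
    IsChordal ((contractEdge G u v).induce {x | x.1 ≠ u}) :=
  hG.of_embedding ⟨⟨fun x => x.1.1, fun _ _ h => Subtype.ext (Subtype.ext h)⟩,
    fun {x y} => (contractEdge_adj_of_ne x.2 y.2).symm⟩

/-- The path closes up into a hole with `u`, with `v`, or with both. -/
theorem IsChordal.not_isInducedPath_ends_adj_edge (hG : IsChordal G) (huv : G.Adj u v)
    (hP : IsInducedPath G L P) (hL : 2 ≤ L) (hPu : ∀ i ≤ L, P i ≠ u) (hPv : ∀ i ≤ L, P i ≠ v)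
    (hends : ∀ i ≤ L, (G.Adj u (P i) ∨ G.Adj v (P i) ↔ i = 0 ∨ i = L)) : False := by
  have hne : ∀ a, (a = u ∨ a = v) → ∀ i ≤ L, P i ≠ a := by
    rintro a (rfl | rfl)
    exacts [hPu, hPv]
  have hends' : ∀ a, (a = u ∨ a = v) → ∀ i ≤ L, G.Adj a (P i) → i = 0 ∨ i = L := by
    rintro a (rfl | rfl) i hi h
    exacts [(hends i hi).1 (Or.inl h), (hends i hi).1 (Or.inr h)]
  have one_side : ∀ a, (a = u ∨ a = v) → G.Adj a (P 0) → G.Adj a (P L) → False := by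
    intro a ha h₀ hL'
    refine hG.not_isHoleAt ⟨hP, hL, hne a ha, fun i hi => ⟨hends' a ha i hi, ?_⟩⟩
    rintro (rfl | rfl) <;> assumption
  have mixed : ∀ a b, (a = u ∧ b = v ∨ a = v ∧ b = u) → G.Adj b (P 0) → ¬G.Adj b (P L) →
      G.Adj a (P L) → ¬G.Adj a (P 0) → False := by
    intro a b hab hb₀ hbL haL ha₀
    have ha : a = u ∨ a = v := by tauto
    have hb : b = u ∨ b = v := by tauto
    have hab' : G.Adj a b := by rcases hab with ⟨rfl, rfl⟩ | ⟨rfl, rfl⟩ <;> simp [huv, huv.symm]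
    refine hG.not_isHoleAt (hP.isHoleAt_cons (by omega) hab' (hne a ha) (hne b hb)
      (fun i hi => ⟨fun h => ?_, by rintro rfl; exact hb₀⟩)
      (fun i hi => ⟨fun h => ?_, by rintro rfl; exact haL⟩))
    · exact (hends' b hb i hi h).resolve_right (by rintro rfl; exact hbL h)
    · exact (hends' a ha i hi h).resolve_left (by rintro rfl; exact ha₀ h)
  by_cases hu : G.Adj u (P 0) ∧ G.Adj u (P L)
  · exact one_side u (Or.inl rfl) hu.1 hu.2
  by_cases hv : G.Adj v (P 0) ∧ G.Adj v (P L)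
  · exact one_side v (Or.inr rfl) hv.1 hv.2
  rcases (hends 0 (by omega)).2 (Or.inl rfl) with h₀ | h₀ <;>
    rcases (hends L le_rfl).2 (Or.inr rfl) with hL' | hL'
  · exact hu ⟨h₀, hL'⟩
  · exact mixed v u (Or.inr ⟨rfl, rfl⟩) h₀ (fun h => hu ⟨h₀, h⟩) hL' (fun h => hv ⟨h, hL'⟩)
  · exact mixed u v (Or.inl ⟨rfl, rfl⟩) h₀ (fun h => hv ⟨h₀, h⟩) hL' (fun h => hu ⟨h, hL'⟩)
  · exact hv ⟨h₀, hL'⟩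

theorem isChordal_contractEdge (hG : IsChordal G) (huv : G.Adj u v) :
    IsChordal (contractEdge G u v) := by
  intro n hn
  refine ⟨fun e => ?_⟩
  obtain ⟨L, rfl⟩ : ∃ L, n = L + 2 := ⟨n - 2, by omega⟩
  obtain ⟨s, hs⟩ := hG.contractEdge_induce.exists_notMem_of_induce hn e
  replace hs : (e s).1 = u := by simpa using hs
  have hQ := isHoleAt_of_embedding e (by omega) s
  set Q := fun k => e (s + Fin.ofNat (L + 2) (k + 1))
  have hQu : ∀ i ≤ L, (Q i).1 ≠ u := fun i hi h =>
    hQ.ne_root i hi (Subtype.ext (h.trans hs.symm))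
  refine hG.not_isInducedPath_ends_adj_edge huv (P := fun k => (Q k).1)
    (hQ.map (S := {x | x.1 ≠ u}) hQu Subtype.val_injective.injOn
      fun x hx y hy => (contractEdge_adj_of_ne hx hy).symm)
    (by omega) hQu (fun i _ => (Q i).2) (fun i hi => ?_)
  rw [← contractEdge_adj_of_eq hs (hQu i hi)]
  exact hQ.root_adj_iff i hi

open Classical in
noncomputable def contractEdgeMap (huv : u ≠ v) (x : α) : {x // x ≠ v} :=
  if hx : x = v then ⟨u, huv⟩ else ⟨x, hx⟩

theorem contractEdgeMap_val (huv : u ≠ v) {x : α} (hx : x ≠ v) :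
    (contractEdgeMap huv x).1 = x := by
  simp [contractEdgeMap, hx]

theorem contractEdge_adj_contractEdgeMap (huv : u ≠ v) {x : α} (hxu : x ≠ u) (hxv : x ≠ v) :
    (contractEdge G u v).Adj ⟨u, huv⟩ (contractEdgeMap huv x) ↔ G.Adj u x ∨ G.Adj v x := by
  rw [contractEdge_adj_of_eq (x := ⟨u, huv⟩) rfl (by rwa [contractEdgeMap_val huv hxv]),
    contractEdgeMap_val huv hxv]

theorem IsInducedPath.contractEdgeMap (hP : IsInducedPath G L P) (huv : u ≠ v)
    (hPuv : ∀ i ≤ L, P i ≠ u ∧ P i ≠ v) :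
    IsInducedPath (contractEdge G u v) L (contractEdgeMap huv ∘ P) :=
  hP.map (S := {x | x ≠ u ∧ x ≠ v}) hPuv
    (fun x hx y hy hxy => by
      rw [← contractEdgeMap_val huv hx.2, ← contractEdgeMap_val huv hy.2, hxy])
    (fun x hx y hy => by
      rw [contractEdge_adj_of_ne (by rw [contractEdgeMap_val huv hx.2]; exact hx.1)
        (by rw [contractEdgeMap_val huv hy.2]; exact hy.1), contractEdgeMap_val huv hx.2,
        contractEdgeMap_val huv hy.2])

/-- Read from a vertex of `{u, v}`, a hole meets `{u, v}` again at most in its last vertex. -/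
theorem IsHoleAt.exists_prefix_avoiding_edge (h : IsHoleAt G c L P) (huv : G.Adj u v)
    (hc : c = u ∨ c = v) (h₀ : P 0 ≠ u ∧ P 0 ≠ v) :
    ∃ b ≤ L, (∀ i ≤ b, P i ≠ u ∧ P i ≠ v) ∧ (G.Adj u (P b) ∨ G.Adj v (P b)) ∧
      ∀ i ≤ L, b < i → P i = u ∨ P i = v := by
  have hc_adj : ∀ x, G.Adj c x → G.Adj u x ∨ G.Adj v x := by
    rcases hc with rfl | rfl
    exacts [fun _ => Or.inl, fun _ => Or.inr]
  have hend : ∀ i ≤ L, (P i = u ∨ P i = v) → i = L := by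
    intro i hi hPi
    have hcP : G.Adj c (P i) := by
      have := h.ne_root i hi
      rcases hc with rfl | rfl <;> rcases hPi with h' | h' <;> simp_all [G.adj_comm]
    exact ((h.root_adj_iff i hi).1 hcP).resolve_left (by rintro rfl; tauto)
  have hL := h.two_le
  by_cases hPL : P L = u ∨ P L = v
  · refine ⟨L - 1, by omega, fun i hi => ?_, ?_, fun i hi hbi => by rwa [show i = L by omega]⟩
    · by_contra h'
      have := hend i (by omega) (by tauto)
      omega
    · have hadj := (h.adj_iff (L - 1) (by omega) L le_rfl).2 (Or.inl (by omega))
      rcases hPL with h' | h' <;> rw [h'] at hadj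
      exacts [Or.inl hadj.symm, Or.inr hadj.symm]
  · refine ⟨L, le_rfl, fun i hi => ?_, hc_adj _ ((h.root_adj_iff L le_rfl).2 (Or.inr rfl)),
      fun i hi hbi => by omega⟩
    by_contra h'
    exact hPL (hend i hi (by tauto) ▸ (by tauto))

theorem IsChordal.adj_edge_of_isHoleAt (hC : IsChordal (contractEdge G u v)) (huv : G.Adj u v)
    (h : IsHoleAt G c L P) (hc : c = u ∨ c = v) (h₀ : P 0 ≠ u ∧ P 0 ≠ v) :
    ∀ i ≤ L, P i = u ∨ G.Adj u (P i) ∨ G.Adj v (P i) := by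
  obtain ⟨b, hbL, hb_avoid, hb_adj, hb_rest⟩ := h.exists_prefix_avoiding_edge huv hc h₀
  have hadj_iff : ∀ i ≤ b, (contractEdge G u v).Adj ⟨u, huv.ne⟩ (contractEdgeMap huv.ne (P i)) ↔
      G.Adj u (P i) ∨ G.Adj v (P i) := fun i hi =>
    contractEdge_adj_contractEdgeMap huv.ne (hb_avoid i hi).1 (hb_avoid i hi).2
  have hP₀ : G.Adj u (P 0) ∨ G.Adj v (P 0) := by
    have := (h.root_adj_iff 0 (Nat.zero_le L)).2 (Or.inl rfl)
    rcases hc with rfl | rfl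
    exacts [Or.inl this, Or.inr this]
  have hfan := hC.adj_of_isInducedPath ((h.mono hbL).contractEdgeMap huv.ne hb_avoid)
    (fun i hi heq => (hb_avoid i hi).1 <| by
      rw [← contractEdgeMap_val huv.ne (hb_avoid i hi).2]; exact congrArg (·.1) heq)
    ((hadj_iff 0 (Nat.zero_le b)).2 hP₀) ((hadj_iff b le_rfl).2 hb_adj)
  intro i hi
  by_cases hib : i ≤ b
  · exact Or.inr ((hadj_iff i hib).1 (hfan i hib))
  · rcases hb_rest i hi (by omega) with h' | h'
    exacts [Or.inl h', Or.inr (Or.inl (h' ▸ huv))]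

theorem IsChordal.adj_edge_of_embedding (hC : IsChordal (contractEdge G u v)) (huv : G.Adj u v)
    {n : ℕ} (hn : 4 ≤ n) (e : cycleGraph n ↪g G) (i : Fin n) :
    e i = u ∨ G.Adj u (e i) ∨ G.Adj v (e i) := by
  obtain ⟨L, rfl⟩ : ∃ L, n = L + 2 := ⟨n - 2, by omega⟩
  obtain ⟨t, ht⟩ := hC.induce_of_contractEdge.exists_notMem_of_induce hn e
  replace ht : e t = u ∨ e t = v := by simpa [or_iff_not_imp_left] using ht
  obtain ⟨s, hs, hs₀⟩ : ∃ s, (e s = u ∨ e s = v) ∧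
      (e (s + Fin.ofNat (L + 2) (0 + 1)) ≠ u ∧ e (s + Fin.ofNat (L + 2) (0 + 1)) ≠ v) := by
    by_cases h₀ : e (t + Fin.ofNat (L + 2) (0 + 1)) = u ∨ e (t + Fin.ofNat (L + 2) (0 + 1)) = v
    · refine ⟨_, h₀, ?_⟩
      have hP := isHoleAt_of_embedding e (by omega) t
      have h₁ := hP.ne_root 1 (by omega)
      have h₂ := hP.ne_root 0 (by omega)
      have h₁₀ : e (t + Fin.ofNat (L + 2) (1 + 1)) ≠ e (t + Fin.ofNat (L + 2) (0 + 1)) :=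
        fun h => absurd (hP.injOn 1 (by omega) 0 (by omega) h) one_ne_zero
      have hpos : t + Fin.ofNat (L + 2) (0 + 1) + Fin.ofNat (L + 2) (0 + 1) =
          t + Fin.ofNat (L + 2) (1 + 1) := by
        rw [add_assoc]
        congr 1
      rw [hpos]
      grind
    · exact ⟨t, ht, not_or.1 h₀⟩
  rcases Fin.eq_or_eq_add_ofNat_succ s i with rfl | ⟨k, hk, rfl⟩
  · rcases hs with h | h
    exacts [Or.inl h, Or.inr (Or.inl (h ▸ huv))]
  · exact hC.adj_edge_of_isHoleAt huv (isHoleAt_of_embedding e (by omega) s) hs hs₀ k hk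

end

theorem chordal_iff_contract_triseparation_general {α : Type} (G : SimpleGraph α) (A X B : Set α)
    (hcover : A ∪ X ∪ B = Set.univ)
    (hAB : Disjoint A B)
    (hsep : ∀ a ∈ A, ∀ b ∈ B, ¬ G.Adj a b)
    (u v : α) (hu : u ∈ B) (hv : v ∈ B) (huv : G.Adj u v) :
    IsChordal G ↔
      (IsChordal (G.induce (A ∪ X)) ∧ IsChordal (G.induce (B ∪ X)) ∧
        IsChordal (contractEdge G u v)) := by
  refine ⟨fun hG => ⟨hG.of_embedding (Embedding.induce _), hG.of_embedding (Embedding.induce _),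
    isChordal_contractEdge hG huv⟩, ?_⟩
  rintro ⟨-, hBX, hC⟩ n hn
  refine ⟨fun e => ?_⟩
  obtain ⟨i, hi⟩ := hBX.exists_notMem_of_induce hn e
  have hiA : e i ∈ A := by
    have : e i ∈ A ∪ X ∪ B := hcover ▸ Set.mem_univ _
    simp only [Set.mem_union] at this hi
    tauto
  rcases hC.adj_edge_of_embedding huv hn e i with h | h | h
  · exact Set.disjoint_left.1 hAB (h ▸ hiA) hu
  · exact hsep _ hiA u hu h.symm
  · exact hsep _ hiA v hv h.symm

/-- Let `(A, X, B)` be a tri-separation of `G` (a partition of the vertex set with no edges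
between `A` and `B`) and let `u, v ∈ B` with `uv ∈ E(G)`. Then `G` is chordal if and only
if `G[A ∪ X]`, `G[B ∪ X]`, and `G / uv` are all chordal. -/
theorem chordal_iff_contract_triseparation {α : Type} (G : SimpleGraph α) (A X B : Set α)
    (hcover : A ∪ X ∪ B = Set.univ)
    (hAX : Disjoint A X) (hAB : Disjoint A B) (hXB : Disjoint X B)
    (hsep : ∀ a ∈ A, ∀ b ∈ B, ¬ G.Adj a b)
    (u v : α) (hu : u ∈ B) (hv : v ∈ B) (huv : G.Adj u v) :
    IsChordal G ↔
      (IsChordal (G.induce (A ∪ X)) ∧ IsChordal (G.induce (B ∪ X)) ∧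
        IsChordal (contractEdge G u v)) :=
  chordal_iff_contract_triseparation_general G A X B hcover hAB hsep u v hu hv huv
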